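/- arXiv:1510.05360 — 2 statements merged into one kernel-verified Lean document; each statement's English description precedes it below -/
import Mathlib

section
/- For every integer n ≥ 1, let e(G) and o(G) denote the numbers of independent sets of even and odd cardinality of a graph G, respectively (the empty set counts as even). Then for cycles: e(C_{3n}) − o(C_{3n}) = 2(−1)^n, e(C_{3n+1}) − o(C_{3n+1}) = (−1)^n, and e(C_{3n+2}) − o(C_{3n+2}) = (−1)^{n+1}. -/
/-- A finset of vertices is independent if no two of its members are adjacent. -/
def IsIndep {V : Type*} (G : SimpleGraph V) (s : Finset V) : Prop :=
  ∀ u ∈ s, ∀ v ∈ s, ¬ G.Adj u v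


/-- The number of independent sets of even cardinality minus the number of independent sets of
odd cardinality, i.e. the value of the independence polynomial at -1. -/
noncomputable def evenOddDiff {V : Type*} (G : SimpleGraph V) : ℤ :=
  (Nat.card {s : Finset V // IsIndep G s ∧ Even s.card} : ℤ) -
    (Nat.card {s : Finset V // IsIndep G s ∧ Odd s.card} : ℤ)

/-!
Encode a vertex set `s` of `C_m` by its indicator word `a : ℤ/m → Bool` and weight each pair of
consecutive letters `(a_i, a_{i+1})` by `0` if both are `true` and by `(-1)^{a_{i+1}}` otherwise.
The weight of the cyclic word is then `(-1)^|s|` if `s` is independent and `0` otherwise, so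
`I(C_m; -1) = tr T^m` for the transfer matrix `T = [[1, -1], [1, 0]]` of these weights. Since
`T² = T - 1`, we get `T³ = -1`, hence `tr T^(3n+r) = (-1)^n tr T^r`, and
`tr T^0, tr T^1, tr T^2 = 2, 1, -1`.
-/

open Finset Matrix SimpleGraph

section Walks

variable {ι R : Type*} [CommSemiring R] (M : Matrix ι ι R)

def walkWeight {m : ℕ} (f : Fin (m + 1) → ι) : R :=
  ∏ i : Fin m, M (f i.castSucc) (f i.succ)

lemma walkWeight_snoc {m : ℕ} (f : Fin (m + 1) → ι) (c : ι) :
    walkWeight M (Fin.snoc f c : Fin (m + 2) → ι) = walkWeight M f * M (f (Fin.last m)) c := by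
  simp only [walkWeight, Fin.prod_univ_castSucc, Fin.succ_castSucc, Fin.snoc_castSucc,
    Fin.succ_last, Fin.snoc_last]

variable [Fintype ι] [DecidableEq ι]

theorem pow_mulVec_apply_eq_sum_walkWeight (m : ℕ) (g : ι → R) (a : ι) :
    (M ^ m *ᵥ g) a = ∑ f : Fin (m + 1) → ι with f 0 = a, walkWeight M f * g (f (Fin.last m)) := by
  induction m generalizing g with
  | zero =>
    rw [pow_zero, one_mulVec, sum_eq_single_of_mem (fun _ => a) (by simp)]
    · simp [walkWeight]
    · intro f hf hfa
      exact absurd (funext fun i => by simpa [Fin.fin_one_eq_zero i] using hf) hfa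
  | succ m ih =>
    rw [pow_succ, ← mulVec_mulVec, ih, sum_filter, sum_filter,
      ← (Fin.snocEquiv fun _ : Fin (m + 2) => ι).sum_comp, Fintype.sum_prod_type]
    conv_rhs => rw [sum_comm]
    refine sum_congr rfl fun f _ => ?_
    have snocEquiv_apply (c : ι) : (Fin.snocEquiv fun _ => ι) (c, f) = Fin.snoc f c := rfl
    have snoc_zero (c : ι) : (Fin.snoc f c : Fin (m + 2) → ι) 0 = f 0 :=
      Fin.snoc_castSucc (i := 0) ..
    simp only [snocEquiv_apply, snoc_zero, walkWeight_snoc, Fin.snoc_last]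
    split_ifs
    · simp only [mulVec, dotProduct, mul_sum, mul_assoc]
    · simp

theorem trace_pow_succ_eq_sum_prod (m : ℕ) :
    trace (M ^ (m + 1)) = ∑ f : Fin (m + 1) → ι, ∏ i, M (f i) (f (i + 1)) := by
  have closed_walk (f : Fin (m + 1) → ι) :
      ∏ i, M (f i) (f (i + 1)) = walkWeight M f * M (f (Fin.last m)) (f 0) := by
    simp only [walkWeight, Fin.prod_univ_castSucc, Fin.coeSucc_eq_succ, Fin.last_add_one]
  have diag (a : ι) : (M ^ (m + 1)) a a = (M ^ m *ᵥ fun c => M c a) a := by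
    rw [pow_succ, mul_apply]; rfl
  simp only [trace, diag_apply, diag, pow_mulVec_apply_eq_sum_walkWeight, closed_walk]
  rw [← sum_fiberwise univ (fun f : Fin (m + 1) → ι => f 0)]
  refine sum_congr rfl fun a _ => sum_congr rfl fun f hf => ?_
  rw [(mem_filter.mp hf).2]

end Walks

def Finset.equivBoolFun (V : Type*) [Fintype V] [DecidableEq V] : Finset V ≃ (V → Bool) where
  toFun s v := decide (v ∈ s)
  invFun f := {v | f v}
  left_inv s := by ext; simp
  right_inv f := by funext; simp

instance {V : Type*} (G : SimpleGraph V) [DecidableRel G.Adj] (s : Finset V) :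
    Decidable (IsIndep G s) :=
  inferInstanceAs (Decidable (∀ u ∈ s, ∀ v ∈ s, ¬ G.Adj u v))

theorem evenOddDiff_eq_sum {V : Type*} [Fintype V] (G : SimpleGraph V) [DecidableRel G.Adj] :
    evenOddDiff G = ∑ s : Finset V with IsIndep G s, (-1) ^ #s := by
  rw [evenOddDiff, Nat.card_eq_fintype_card, Nat.card_eq_fintype_card, Fintype.card_subtype,
    Fintype.card_subtype, ← sum_filter_add_sum_filter_not _ (fun s => Even #s), filter_filter,
    filter_filter, sum_congr rfl fun s hs => (mem_filter.mp hs).2.2.neg_one_pow,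
    sum_congr rfl fun s hs => (Nat.not_even_iff_odd.mp (mem_filter.mp hs).2.2).neg_one_pow]
  simp only [sum_const, Nat.not_even_iff_odd, nsmul_eq_mul, mul_one, mul_neg, sub_eq_add_neg]

theorem isIndep_cycleGraph_iff {k : ℕ} (s : Finset (Fin (k + 2))) :
    IsIndep (cycleGraph (k + 2)) s ↔ ∀ i, ¬(i ∈ s ∧ i + 1 ∈ s) := by
  constructor
  · rintro h i ⟨hi, hi1⟩
    exact h _ hi1 _ hi (by simp [cycleGraph_adj])
  · rintro h u hu v hv (huv | hvu)
    · exact h v ⟨hv, eq_add_of_sub_eq' huv ▸ hu⟩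
    · exact h u ⟨hu, eq_add_of_sub_eq' hvu ▸ hv⟩

def indepTransfer : Matrix Bool Bool ℤ :=
  of fun a b => if a && b then 0 else if b then -1 else 1

theorem prod_indepTransfer {k : ℕ} (s : Finset (Fin (k + 2))) :
    ∏ i, indepTransfer (decide (i ∈ s)) (decide (i + 1 ∈ s)) =
      if IsIndep (cycleGraph (k + 2)) s then (-1) ^ #s else 0 := by
  split_ifs with h
  · rw [isIndep_cycleGraph_iff] at h
    have sign (i) : indepTransfer (decide (i ∈ s)) (decide (i + 1 ∈ s)) =
        if i + 1 ∈ s then -1 else 1 := by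
      have := h i
      by_cases i ∈ s <;> by_cases i + 1 ∈ s <;> simp_all [indepTransfer]
    rw [Fintype.prod_congr _ _ sign, Fintype.prod_equiv (Equiv.addRight 1)
      (fun i => if i + 1 ∈ s then -1 else 1) (fun i => if i ∈ s then -1 else 1) fun _ => rfl,
      prod_ite_mem, univ_inter, prod_const]
  · obtain ⟨i, hi⟩ : ∃ i, i ∈ s ∧ i + 1 ∈ s := by simpa [isIndep_cycleGraph_iff] using h
    exact prod_eq_zero (mem_univ i) (by simp [indepTransfer, hi])

theorem evenOddDiff_cycleGraph {m : ℕ} (hm : 2 ≤ m) :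
    evenOddDiff (cycleGraph m) = trace (indepTransfer ^ m) := by
  obtain ⟨k, rfl⟩ := Nat.exists_eq_add_of_le' hm
  rw [evenOddDiff_eq_sum, sum_filter, trace_pow_succ_eq_sum_prod]
  exact Fintype.sum_equiv (Finset.equivBoolFun _) _ _ fun s => (prod_indepTransfer s).symm

theorem indepTransfer_pow_three : indepTransfer ^ 3 = -1 := by
  decide

theorem trace_indepTransfer_pow_three_mul_add (n r : ℕ) :
    trace (indepTransfer ^ (3 * n + r)) = (-1) ^ n * trace (indepTransfer ^ r) := by
  induction n with
  | zero => simp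
  | succ n ih =>
    rw [show 3 * (n + 1) + r = 3 + (3 * n + r) by ring, pow_add, indepTransfer_pow_three,
      neg_one_mul, trace_neg, ih, pow_succ]
    ring

theorem cycle_evenOddDiff (n : ℕ) (hn : 1 ≤ n) :
    evenOddDiff (SimpleGraph.cycleGraph (3 * n)) = 2 * (-1) ^ n ∧
    evenOddDiff (SimpleGraph.cycleGraph (3 * n + 1)) = (-1) ^ n ∧
    evenOddDiff (SimpleGraph.cycleGraph (3 * n + 2)) = (-1) ^ (n + 1) := by
  have cycle (r : ℕ) (hr : 2 ≤ 3 * n + r) :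
      evenOddDiff (cycleGraph (3 * n + r)) = (-1) ^ n * trace (indepTransfer ^ r) := by
    rw [evenOddDiff_cycleGraph hr, trace_indepTransfer_pow_three_mul_add]
  obtain ⟨trace_zero, trace_one, trace_two⟩ : trace (indepTransfer ^ 0) = 2 ∧
      trace (indepTransfer ^ 1) = 1 ∧ trace (indepTransfer ^ 2) = -1 := by
    decide
  refine ⟨?_, ?_, ?_⟩
  · rw [← Nat.add_zero (3 * n), cycle 0 (by omega), trace_zero, mul_comm]
  · rw [cycle 1 (by omega), trace_one, mul_one]
  · rw [cycle 2 (by omega), trace_two, pow_succ]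
end

section
/- Let G = K_{n_1,n_2,…,n_m} be a complete m-partite graph with m ≥ 1 parts, each part nonempty. Then the graph I*_α(G), whose vertices are all nonempty independent sets of G with two such sets adjacent if and only if one is obtained from the other by adding a single vertex, has exactly m connected components. -/
/-- The graph whose vertices are all nonempty independent sets of `G`, two of them adjacent
iff one is obtained from the other by adding a single vertex. -/
def indepGraphStar {V : Type*} (G : SimpleGraph V) :
    SimpleGraph {s : Finset V // IsIndep G s ∧ s.Nonempty} where
  Adj A B := (A.1 ⊆ B.1 ∧ B.1.card = A.1.card + 1) ∨ (B.1 ⊆ A.1 ∧ A.1.card = B.1.card + 1)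
  symm := by
    constructor
    rintro A B (⟨h1, h2⟩ | ⟨h1, h2⟩)
    · exact Or.inr ⟨h1, h2⟩
    · exact Or.inl ⟨h1, h2⟩
  loopless := by
    constructor
    rintro A (⟨_, h⟩ | ⟨_, h⟩) <;> omega

/-!
Every nonempty independent set is joined to each of its nonempty subsets by deleting one vertex
at a time, so two singletons `{u}`, `{v}` of non-adjacent vertices are connected through
`{u, v}`. In a complete multipartite graph the independent sets are exactly the nonempty subsets
of single parts, and a step of `I*_α` never leaves a part, so the components correspond to the
parts.
-/

section IsIndep

variable {V : Type*} {G : SimpleGraph V}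

lemma IsIndep.mono {s t : Finset V} (ht : IsIndep G t) (hst : s ⊆ t) : IsIndep G s :=
  fun u hu v hv => ht u (hst hu) v (hst hv)

lemma isIndep_pair [DecidableEq V] {u v : V} (huv : ¬ G.Adj u v) : IsIndep G {u, v} := by
  simp only [IsIndep, Finset.mem_insert, Finset.mem_singleton]
  rintro x (rfl | rfl) y (rfl | rfl)
  exacts [G.loopless.irrefl _, huv, fun h => huv h.symm, G.loopless.irrefl _]

lemma isIndep_singleton (a : V) : IsIndep G {a} := by
  classical
  simpa using isIndep_pair (G.loopless.irrefl a)

end IsIndep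

section indepGraphStar

variable {V : Type*} {G : SimpleGraph V}

def indepSingleton (G : SimpleGraph V) (a : V) : {s : Finset V // IsIndep G s ∧ s.Nonempty} :=
  ⟨{a}, isIndep_singleton a, Finset.singleton_nonempty a⟩

lemma indepGraphStar_reachable_of_subset (A B : {s : Finset V // IsIndep G s ∧ s.Nonempty})
    (hAB : A.1 ⊆ B.1) : (indepGraphStar G).Reachable A B := by
  classical
  obtain ⟨s, hs, hsne⟩ := B
  induction s using Finset.strongInduction with
  | H s ih =>
    by_cases hAs : A.1 = s
    · obtain ⟨t, ht⟩ := A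
      subst hAs
      rfl
    obtain ⟨b, hbs, hbA⟩ := Finset.exists_of_ssubset (Finset.ssubset_iff_subset_ne.2 ⟨hAB, hAs⟩)
    have hAsub : A.1 ⊆ s.erase b := fun x hx =>
      Finset.mem_erase.2 ⟨fun h => hbA (h ▸ hx), hAB hx⟩
    have hind : IsIndep G (s.erase b) := hs.mono (s.erase_subset b)
    have hadj : (indepGraphStar G).Adj ⟨s.erase b, hind, A.2.2.mono hAsub⟩ ⟨s, hs, hsne⟩ :=
      Or.inl ⟨s.erase_subset b, (Finset.card_erase_add_one hbs).symm⟩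
    exact (ih _ (Finset.erase_ssubset hbs) hind (A.2.2.mono hAsub) hAsub).trans hadj.reachable

lemma indepGraphStar_reachable_indepSingleton_of_mem
    (A : {s : Finset V // IsIndep G s ∧ s.Nonempty}) {a : V} (ha : a ∈ A.1) :
    (indepGraphStar G).Reachable (indepSingleton G a) A :=
  indepGraphStar_reachable_of_subset _ _ (Finset.singleton_subset_iff.2 ha)

lemma indepGraphStar_reachable_indepSingleton_of_not_adj {u v : V} (huv : ¬ G.Adj u v) :
    (indepGraphStar G).Reachable (indepSingleton G u) (indepSingleton G v) := by
  classical
  let P : {s : Finset V // IsIndep G s ∧ s.Nonempty} :=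
    ⟨{u, v}, isIndep_pair huv, Finset.insert_nonempty u {v}⟩
  exact (indepGraphStar_reachable_indepSingleton_of_mem P (by simp [P])).trans
    (indepGraphStar_reachable_indepSingleton_of_mem P (by simp [P])).symm

end indepGraphStar

section completeMultipartiteGraph

open SimpleGraph

variable {ι : Type*} {V : ι → Type*}

lemma IsIndep.fst_eq_of_completeMultipartiteGraph {s : Finset ((i : ι) × V i)}
    (hs : IsIndep (completeMultipartiteGraph V) s) {u v : (i : ι) × V i} (hu : u ∈ s)
    (hv : v ∈ s) : u.1 = v.1 :=
  not_not.1 (hs u hu v hv)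

lemma indepGraphStar_completeMultipartiteGraph_fst_eq_of_reachable
    {A B : {s : Finset ((i : ι) × V i) // IsIndep (completeMultipartiteGraph V) s ∧ s.Nonempty}}
    (hAB : (indepGraphStar (completeMultipartiteGraph V)).Reachable A B)
    {a b : (i : ι) × V i} (ha : a ∈ A.1) (hb : b ∈ B.1) : a.1 = b.1 := by
  rw [reachable_iff_reflTransGen] at hAB
  induction hAB generalizing b with
  | refl => exact A.2.1.fst_eq_of_completeMultipartiteGraph ha hb
  | @tail B C _ hBC ih =>
    obtain ⟨c, hc⟩ := B.2.2
    rcases hBC with ⟨hBC, -⟩ | ⟨hCB, -⟩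
    · exact (ih hc).trans (C.2.1.fst_eq_of_completeMultipartiteGraph (hBC hc) hb)
    · exact ih (hCB hb)

theorem indepGraphStar_completeMultipartiteGraph_bijective (x : ∀ i, V i) :
    Function.Bijective fun i =>
      (indepGraphStar (completeMultipartiteGraph V)).connectedComponentMk
        (indepSingleton _ ⟨i, x i⟩) := by
  refine ⟨fun i j hij => ?_, fun C => C.ind fun A => ?_⟩
  · exact indepGraphStar_completeMultipartiteGraph_fst_eq_of_reachable
      (ConnectedComponent.exact hij) (Finset.mem_singleton_self _) (Finset.mem_singleton_self _)
  · obtain ⟨a, ha⟩ := A.2.2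
    have hpart : ¬ (completeMultipartiteGraph V).Adj ⟨a.1, x a.1⟩ a := not_not.2 rfl
    exact ⟨a.1, ConnectedComponent.sound
      ((indepGraphStar_reachable_indepSingleton_of_not_adj hpart).trans
        (indepGraphStar_reachable_indepSingleton_of_mem A ha))⟩

end completeMultipartiteGraph

theorem indepGraphStar_multipartite_components_general (m : ℕ)
    (n : Fin m → ℕ) (hn : ∀ i, 1 ≤ n i) :
    Nat.card
      (indepGraphStar (SimpleGraph.completeMultipartiteGraph fun i : Fin m => Fin (n i))).ConnectedComponent
      = m := by
  rw [← Nat.card_eq_of_bijective _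
    (indepGraphStar_completeMultipartiteGraph_bijective fun i => (⟨0, hn i⟩ : Fin (n i))),
    Nat.card_eq_fintype_card, Fintype.card_fin]

theorem indepGraphStar_multipartite_components (m : ℕ) (hm : 1 ≤ m)
    (n : Fin m → ℕ) (hn : ∀ i, 1 ≤ n i) :
    Nat.card
      (indepGraphStar (SimpleGraph.completeMultipartiteGraph fun i : Fin m => Fin (n i))).ConnectedComponent
      = m :=
  indepGraphStar_multipartite_components_general m n hn
end
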